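/- Let X be an n×n matrix over a commutative ring and let A, B ⊆ {1,…,n}. Then Σ_{V ⊆ B} X{A|V} = Σ_{U ⊇ A} X{U|B}, where the left sum is over all subsets V of B and the right sum is over all subsets U of {1,…,n} containing A. -/
import Mathlib


open Finset Equiv Matrix

/-- The minor `X(A|B)`: the determinant of the submatrix of `X` with row indices in `A` and
column indices in `B`, taken in increasing order; `0` if `|A| ≠ |B|`. -/
def minorM {m n : ℕ} {R : Type*} [CommRing R]
    (X : Matrix (Fin m) (Fin n) R) (A : Finset (Fin m)) (B : Finset (Fin n)) : R :=
  if h : A.card = B.card then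
    (Matrix.of fun i j : Fin A.card =>
      X (A.orderEmbOfFin rfl i) (B.orderEmbOfFin h.symm j)).det
  else 0

/-- The Laplace product `X{A|B} = (-1)^(ΣA+ΣB) X(A|B) X(Ã|B̃)`, where elements of
`Fin n` are counted as the numbers `1,…,n` (so `i : Fin n` counts as `i+1`). -/
def lap {n : ℕ} {R : Type*} [CommRing R]
    (X : Matrix (Fin n) (Fin n) R) (A B : Finset (Fin n)) : R :=
  (-1 : R) ^ (∑ i ∈ A, ((i : ℕ) + 1) + ∑ j ∈ B, ((j : ℕ) + 1)) *
    (minorM X A B * minorM X Aᶜ Bᶜ)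

/-- The partial order `S ≤ T` on finite subsets of a linearly ordered set:
writing `S = {s₁<⋯<s_p}` and `T = {t₁<⋯<t_q}`, it means `p ≥ q` and `s_ν ≤ t_ν` for `ν ≤ q`. -/
def domLE {α : Type*} [LinearOrder α] (S T : Finset α) : Prop :=
  T.card ≤ S.card ∧ ∀ (ν : ℕ) (hT : ν < (T.sort (· ≤ ·)).length)
    (hS : ν < (S.sort (· ≤ ·)).length),
    (S.sort (· ≤ ·))[ν] ≤ (T.sort (· ≤ ·))[ν]

/-- A subset `S ⊆ {1,…,n}` is good if `S ≤ S̃` where `S̃` is the complement of `S`. -/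
def goodSet {n : ℕ} (S : Finset (Fin n)) : Prop := domLE S Sᶜ

/-- The generic `m×n` matrix, whose entries are the indeterminates `x_{ij}`. -/
noncomputable def genX (m n : ℕ) (R : Type*) [CommRing R] :
    Matrix (Fin m) (Fin n) (MvPolynomial (Fin m × Fin n) R) :=
  Matrix.of fun i j => MvPolynomial.X (i, j)
variable {n : ℕ}

lemma mem_of_range_orderEmbOfFin {S : Finset (Fin n)} {k : ℕ} (h : S.card = k) {x : Fin n}
    (hx : x ∈ S) : ∃ i : Fin k, S.orderEmbOfFin h i = x := by
  have : (x : Fin n) ∈ Set.range (S.orderEmbOfFin h) := by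
    rw [Finset.range_orderEmbOfFin]; exact hx
  exact this

/-- The equivalence `Fin k ⊕ Fin l ≃ Fin n` built from a finset `S` of card `k`
(with complement of card `l`). -/
noncomputable def blockEquiv (S : Finset (Fin n)) {k l : ℕ} (h1 : S.card = k)
    (h2 : Sᶜ.card = l) : Fin k ⊕ Fin l ≃ Fin n :=
  Equiv.ofBijective (Sum.elim (S.orderEmbOfFin h1) (Sᶜ.orderEmbOfFin h2)) (by
    constructor
    · rintro (i | i) (j | j) hij <;> simp only [Sum.elim_inl, Sum.elim_inr] at hij
      · simp [ (S.orderEmbOfFin h1).injective hij ]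
      · have h1' := Finset.orderEmbOfFin_mem S h1 i
        have h2' := Finset.orderEmbOfFin_mem Sᶜ h2 j
        rw [hij] at h1'; rw [Finset.mem_compl] at h2'; exact absurd h1' h2'
      · have h1' := Finset.orderEmbOfFin_mem S h1 j
        have h2' := Finset.orderEmbOfFin_mem Sᶜ h2 i
        rw [← hij] at h1'; rw [Finset.mem_compl] at h2'; exact absurd h1' h2'
      · simp [ (Sᶜ.orderEmbOfFin h2).injective hij ]
    · intro x
      by_cases hx : x ∈ S
      · obtain ⟨i, hi⟩ := mem_of_range_orderEmbOfFin h1 hx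
        exact ⟨Sum.inl i, hi⟩
      · obtain ⟨i, hi⟩ := mem_of_range_orderEmbOfFin h2 (Finset.mem_compl.mpr hx)
        exact ⟨Sum.inr i, hi⟩)

@[simp] lemma blockEquiv_inl (S : Finset (Fin n)) {k l : ℕ} (h1 : S.card = k)
    (h2 : Sᶜ.card = l) (i : Fin k) : blockEquiv S h1 h2 (Sum.inl i) = S.orderEmbOfFin h1 i := rfl

@[simp] lemma blockEquiv_inr (S : Finset (Fin n)) {k l : ℕ} (h1 : S.card = k)
    (h2 : Sᶜ.card = l) (i : Fin l) : blockEquiv S h1 h2 (Sum.inr i) = Sᶜ.orderEmbOfFin h2 i := rfl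

lemma blockEquiv_inl_mem (S : Finset (Fin n)) {k l : ℕ} (h1 : S.card = k)
    (h2 : Sᶜ.card = l) (i : Fin k) : blockEquiv S h1 h2 (Sum.inl i) ∈ S :=
  Finset.orderEmbOfFin_mem S h1 i

lemma blockEquiv_inr_mem (S : Finset (Fin n)) {k l : ℕ} (h1 : S.card = k)
    (h2 : Sᶜ.card = l) (i : Fin l) : blockEquiv S h1 h2 (Sum.inr i) ∉ S := by
  have := Finset.orderEmbOfFin_mem Sᶜ h2 i
  rwa [Finset.mem_compl] at this

/-- Downward-closed subsets of `Fin n`. -/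
def DC (S : Finset (Fin n)) : Prop := ∀ a ∈ S, ∀ b : Fin n, b < a → b ∈ S

lemma DC_eq_filter {S : Finset (Fin n)} (hS : DC S) :
    S = Finset.univ.filter (fun i : Fin n => (i : ℕ) < S.card) := by
  have hk : S.card ≤ n := le_trans (Finset.card_le_univ S) (by simp)
  have hcard : (Finset.univ.filter (fun i : Fin n => (i : ℕ) < S.card)).card = S.card := by
    have : Finset.univ.filter (fun i : Fin n => (i : ℕ) < S.card)
        = Finset.map (Fin.castLEEmb hk) Finset.univ := by
      ext x
      simp only [Finset.mem_filter, Finset.mem_univ, true_and, Finset.mem_map]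
      constructor
      · intro hx; exact ⟨⟨x, hx⟩, by simp [Fin.castLEEmb]⟩
      · rintro ⟨j, rfl⟩; simpa [Fin.castLEEmb] using j.2
    rw [this, Finset.card_map, Finset.card_univ, Fintype.card_fin]
  refine Finset.eq_of_subset_of_card_le ?_ (le_of_eq hcard)
  intro x hx
  simp only [Finset.mem_filter, Finset.mem_univ, true_and]
  have hsub : Finset.Iic x ⊆ S := by
    intro b hb
    rcases lt_or_eq_of_le (Finset.mem_Iic.mp hb) with h | h
    · exact hS x hx b h
    · exact h ▸ hx
  have hIic : (Finset.Iic x).card = (x : ℕ) + 1 := by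
    exact Fin.card_Iic x
  calc (x : ℕ) < (x : ℕ) + 1 := Nat.lt_succ_self _
  _ = (Finset.Iic x).card := hIic.symm
  _ ≤ S.card := Finset.card_le_card hsub

lemma DC_eq {S T : Finset (Fin n)} (hS : DC S) (hT : DC T) (h : S.card = T.card) : S = T := by
  rw [DC_eq_filter hS, DC_eq_filter hT, h]

section Step

variable {S : Finset (Fin n)} {s s' : Fin n}

lemma exists_step (h : ¬ DC S) :
    ∃ s ∈ S, ∃ s' : Fin n, (s' : ℕ) = (s : ℕ) - 1 ∧ (s : ℕ) ≠ 0 ∧ s' ∉ S := by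
  simp only [DC, not_forall] at h
  obtain ⟨a, ha, b, hb, hbS⟩ := h
  have hne : a ∈ S ∩ Finset.Ioc b a := by
    simp [ha, Finset.mem_Ioc, hb]
  set T := S ∩ Finset.Ioc b a with hT
  have hTne : T.Nonempty := ⟨a, hne⟩
  set s := T.min' hTne with hsdef
  have hsT : s ∈ T := T.min'_mem hTne
  have hsS : s ∈ S := (Finset.mem_inter.mp hsT).1
  have hsIoc := Finset.mem_Ioc.mp (Finset.mem_inter.mp hsT).2
  have hbs : b < s := hsIoc.1
  have hs0 : (s : ℕ) ≠ 0 := by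
    have : (b : ℕ) < (s : ℕ) := hbs
    omega
  have hsn : (s : ℕ) < n := s.2
  refine ⟨s, hsS, ⟨(s : ℕ) - 1, by omega⟩, rfl, hs0, ?_⟩
  intro hs'S
  set s' : Fin n := ⟨(s : ℕ) - 1, by omega⟩ with hs'def
  have hs'v : (s' : ℕ) = (s : ℕ) - 1 := rfl
  have hbv : (b : ℕ) < (s : ℕ) := hbs
  by_cases hsb : (s' : ℕ) = (b : ℕ)
  · have : b = s' := Fin.ext hsb.symm
    rw [this] at hbS
    exact hbS hs'S
  · have hbs' : b < s' := Fin.lt_def.mpr (by omega)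
    have hs's : s' < s := Fin.lt_def.mpr (by omega)
    have hs'T : s' ∈ T := by
      refine Finset.mem_inter.mpr ⟨hs'S, Finset.mem_Ioc.mpr ⟨hbs', ?_⟩⟩
      exact le_trans (le_of_lt hs's) hsIoc.2
    have := T.min'_le s' hs'T
    rw [← hsdef] at this
    exact absurd this (not_le.mpr hs's)

variable (hmem : s ∈ S) (hval : (s' : ℕ) = (s : ℕ) - 1) (hs0 : (s : ℕ) ≠ 0) (hnot : s' ∉ S)

include hmem hval hs0 hnot

omit hmem hnot in
lemma step_lt : s' < s := by
  have h1 : (s' : ℕ) = (s : ℕ) - 1 := hval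
  exact Fin.lt_def.mpr (by omega)

lemma step_card : (insert s' (S.erase s)).card = S.card := by
  rw [Finset.card_insert_of_notMem (fun hc => hnot (Finset.mem_of_mem_erase hc)),
    Finset.card_erase_of_mem hmem]
  have : 0 < S.card := Finset.card_pos.mpr ⟨s, hmem⟩
  omega

lemma step_sum : (∑ i ∈ S, (i : ℕ)) = (∑ i ∈ insert s' (S.erase s), (i : ℕ)) + 1 := by
  rw [Finset.sum_insert (fun hc => hnot (Finset.mem_of_mem_erase hc))]
  have h1 : (s : ℕ) + ∑ x ∈ S.erase s, (x : ℕ) = ∑ x ∈ S, (x : ℕ) :=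
    Finset.add_sum_erase S (fun i : Fin n => (i : ℕ)) hmem
  omega

lemma step_orderEmb {k : ℕ} (h1 : S.card = k) (h1' : (insert s' (S.erase s)).card = k)
    (i : Fin k) :
    (insert s' (S.erase s)).orderEmbOfFin h1' i = Equiv.swap s' s (S.orderEmbOfFin h1 i) := by
  have hlt : s' < s := step_lt hval hs0
  have key : (fun i : Fin k => Equiv.swap s' s (S.orderEmbOfFin h1 i))
      = (insert s' (S.erase s)).orderEmbOfFin h1' := by
    apply Finset.orderEmbOfFin_unique
    · intro x
      show Equiv.swap s' s (S.orderEmbOfFin h1 x) ∈ insert s' (S.erase s)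
      have hx : S.orderEmbOfFin h1 x ∈ S := Finset.orderEmbOfFin_mem S h1 x
      set a := S.orderEmbOfFin h1 x
      have ha' : a ≠ s' := fun hc => hnot (hc ▸ hx)
      by_cases has : a = s
      · rw [has, Equiv.swap_apply_right]
        exact Finset.mem_insert_self _ _
      · rw [Equiv.swap_apply_of_ne_of_ne ha' has]
        exact Finset.mem_insert_of_mem (Finset.mem_erase.mpr ⟨has, hx⟩)
    · intro x y hxy
      show Equiv.swap s' s (S.orderEmbOfFin h1 x) < Equiv.swap s' s (S.orderEmbOfFin h1 y)
      have hx : S.orderEmbOfFin h1 x ∈ S := Finset.orderEmbOfFin_mem S h1 x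
      have hy : S.orderEmbOfFin h1 y ∈ S := Finset.orderEmbOfFin_mem S h1 y
      set a := S.orderEmbOfFin h1 x
      set b := S.orderEmbOfFin h1 y
      have hab : a < b := (S.orderEmbOfFin h1).strictMono hxy
      have ha' : a ≠ s' := fun hc => hnot (hc ▸ hx)
      have hb' : b ≠ s' := fun hc => hnot (hc ▸ hy)
      by_cases has : a = s
      · have hbs : b ≠ s := fun hc => by rw [has, hc] at hab; exact lt_irrefl _ hab
        rw [has, Equiv.swap_apply_right, Equiv.swap_apply_of_ne_of_ne hb' hbs]
        exact lt_trans hlt (has ▸ hab)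
      · rw [Equiv.swap_apply_of_ne_of_ne ha' has]
        by_cases hbs : b = s
        · rw [hbs, Equiv.swap_apply_right]
          have h1lt : (a : ℕ) < (s : ℕ) := by rw [← hbs]; exact hab
          have h2ne : (a : ℕ) ≠ (s' : ℕ) := fun hc => ha' (Fin.ext hc)
          exact Fin.lt_def.mpr (by omega)
        · rw [Equiv.swap_apply_of_ne_of_ne hb' hbs]; exact hab
  rw [← key]

lemma step_compl : (insert s' (S.erase s))ᶜ = insert s (Sᶜ.erase s') := by
  ext x
  simp only [Finset.mem_compl, Finset.mem_insert, Finset.mem_erase, Finset.mem_compl]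
  constructor
  · intro hx
    push_neg at hx
    by_cases hxs : x = s
    · exact Or.inl hxs
    · exact Or.inr ⟨hx.1, fun hxS => (hx.2 hxs hxS).elim⟩
  · rintro (rfl | ⟨hxs', hxS⟩)
    · push_neg
      exact ⟨fun hc => (step_lt hval hs0).ne hc.symm, fun hne => absurd rfl hne⟩
    · push_neg
      exact ⟨hxs', fun _ => hxS⟩

end Step

section Step2

variable {S : Finset (Fin n)} {s s' : Fin n}
variable (hmem : s ∈ S) (hval : (s' : ℕ) = (s : ℕ) - 1) (hs0 : (s : ℕ) ≠ 0) (hnot : s' ∉ S)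

include hmem hval hs0 hnot

lemma step_orderEmb_compl {l : ℕ} (h2 : Sᶜ.card = l)
    (h2' : (insert s' (S.erase s))ᶜ.card = l) (j : Fin l) :
    (insert s' (S.erase s))ᶜ.orderEmbOfFin h2' j = Equiv.swap s' s (Sᶜ.orderEmbOfFin h2 j) := by
  have hlt : s' < s := step_lt hval hs0
  have hsnotmem : s ∉ insert s' (S.erase s) := by
    simp only [Finset.mem_insert, Finset.mem_erase]
    push_neg
    exact ⟨fun hc => hlt.ne hc.symm, fun hne => absurd rfl hne⟩
  have key : (fun j : Fin l => Equiv.swap s' s (Sᶜ.orderEmbOfFin h2 j))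
      = (insert s' (S.erase s))ᶜ.orderEmbOfFin h2' := by
    apply Finset.orderEmbOfFin_unique
    · intro x
      show Equiv.swap s' s (Sᶜ.orderEmbOfFin h2 x) ∈ (insert s' (S.erase s))ᶜ
      have hx : Sᶜ.orderEmbOfFin h2 x ∈ Sᶜ := Finset.orderEmbOfFin_mem Sᶜ h2 x
      rw [Finset.mem_compl] at hx
      set a := Sᶜ.orderEmbOfFin h2 x
      have has : a ≠ s := fun hc => hx (hc ▸ hmem)
      by_cases ha' : a = s'
      · rw [ha', Equiv.swap_apply_left]
        exact Finset.mem_compl.mpr hsnotmem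
      · rw [Equiv.swap_apply_of_ne_of_ne ha' has]
        rw [Finset.mem_compl, Finset.mem_insert]
        push_neg
        exact ⟨ha', fun hc => absurd (Finset.mem_erase.mp hc).2 hx⟩
    · intro x y hxy
      show Equiv.swap s' s (Sᶜ.orderEmbOfFin h2 x) < Equiv.swap s' s (Sᶜ.orderEmbOfFin h2 y)
      have hx : Sᶜ.orderEmbOfFin h2 x ∈ Sᶜ := Finset.orderEmbOfFin_mem Sᶜ h2 x
      have hy : Sᶜ.orderEmbOfFin h2 y ∈ Sᶜ := Finset.orderEmbOfFin_mem Sᶜ h2 y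
      rw [Finset.mem_compl] at hx hy
      set a := Sᶜ.orderEmbOfFin h2 x
      set b := Sᶜ.orderEmbOfFin h2 y
      have hab : a < b := (Sᶜ.orderEmbOfFin h2).strictMono hxy
      have has : a ≠ s := fun hc => hx (hc ▸ hmem)
      have hbs : b ≠ s := fun hc => hy (hc ▸ hmem)
      by_cases ha' : a = s'
      · have hb' : b ≠ s' := fun hc => by rw [ha', hc] at hab; exact lt_irrefl _ hab
        rw [ha', Equiv.swap_apply_left, Equiv.swap_apply_of_ne_of_ne hb' hbs]
        have h1 : (s' : ℕ) < (b : ℕ) := ha' ▸ hab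
        have h2 : (b : ℕ) ≠ (s : ℕ) := fun hc => hbs (Fin.ext hc)
        have h3 : (s' : ℕ) = (s : ℕ) - 1 := hval
        exact Fin.lt_def.mpr (by omega)
      · rw [Equiv.swap_apply_of_ne_of_ne ha' has]
        by_cases hb' : b = s'
        · rw [hb', Equiv.swap_apply_left]
          exact lt_trans (hb' ▸ hab) hlt
        · rw [Equiv.swap_apply_of_ne_of_ne hb' hbs]; exact hab
  rw [← key]

lemma step_blockEquiv {k l : ℕ} (h1 : S.card = k) (h2 : Sᶜ.card = l)
    (h1' : (insert s' (S.erase s)).card = k) (h2' : (insert s' (S.erase s))ᶜ.card = l) :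
    blockEquiv (insert s' (S.erase s)) h1' h2'
      = (blockEquiv S h1 h2).trans (Equiv.swap s' s) := by
  apply Equiv.ext
  rintro (i | j)
  · exact step_orderEmb hmem hval hs0 hnot h1 h1' i
  · exact step_orderEmb_compl hmem hval hs0 hnot h2 h2' j

end Step2

lemma sign_blockPerm_aux (m : ℕ) :
    ∀ (A V : Finset (Fin n)) {k l : ℕ} (hA : A.card = k) (hA2 : Aᶜ.card = l)
      (hV : V.card = k) (hV2 : Vᶜ.card = l),
      (∑ i ∈ A, (i : ℕ)) + (∑ i ∈ V, (i : ℕ)) = m →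
      Equiv.Perm.sign ((blockEquiv V hV hV2).symm.trans (blockEquiv A hA hA2))
        = (-1) ^ m := by
  induction m using Nat.strong_induction_on with
  | _ m IH =>
    intro A V k l hA hA2 hV hV2 hm
    by_cases hdcV : DC V
    · by_cases hdcA : DC A
      · obtain rfl : A = V := DC_eq hdcA hdcV (hA.trans hV.symm)
        have he : blockEquiv A hV hV2 = blockEquiv A hA hA2 := rfl
        rw [he, Equiv.symm_trans_self]
        have hev : Even m := by
          rw [← hm]
          exact ⟨∑ i ∈ A, (i : ℕ), by ring⟩
        rw [hev.neg_one_pow]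
        exact Equiv.Perm.sign_refl
      · -- step on A
        obtain ⟨t, ht, t', htval, ht0, ht'⟩ := exists_step hdcA
        set A' := insert t' (A.erase t) with hA'def
        have hA'c : A'.card = k := (step_card ht htval ht0 ht').trans hA
        have hA'2 : A'ᶜ.card = l := by
          rw [Finset.card_compl, hA'c, ← hA, ← Finset.card_compl, hA2]
        have hsumA := step_sum ht htval ht0 ht'
        rw [← hA'def] at hsumA
        have hm1 : 1 ≤ m := by omega
        obtain ⟨m', rfl⟩ : ∃ m', m = m' + 1 := ⟨m - 1, by omega⟩
        have hsum' : (∑ i ∈ A', (i : ℕ)) + (∑ i ∈ V, (i : ℕ)) = m' := by omega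
        have he := step_blockEquiv ht htval ht0 ht' hA hA2 hA'c hA'2
        have hrel : (blockEquiv V hV hV2).symm.trans (blockEquiv A' hA'c hA'2)
            = ((blockEquiv V hV hV2).symm.trans (blockEquiv A hA hA2)).trans
                (Equiv.swap t' t) := by
          rw [he]; rfl
        have hIH := IH m' (by omega) A' V hA'c hA'2 hV hV2 hsum'
        rw [hrel] at hIH
        have hsw : Equiv.Perm.sign (Equiv.swap t' t) = -1 :=
          Equiv.Perm.sign_swap (step_lt htval ht0).ne
        have hmul : (((blockEquiv V hV hV2).symm.trans (blockEquiv A hA hA2)).trans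
            (Equiv.swap t' t) : Equiv.Perm (Fin n))
            = (Equiv.swap t' t) * ((blockEquiv V hV hV2).symm.trans (blockEquiv A hA hA2)) :=
          rfl
        rw [hmul, _root_.map_mul, hsw] at hIH
        rw [pow_succ, ← hIH, neg_one_mul, mul_neg_one, neg_neg]
    · -- step on V
      obtain ⟨t, ht, t', htval, ht0, ht'⟩ := exists_step hdcV
      set V' := insert t' (V.erase t) with hV'def
      have hV'c : V'.card = k := (step_card ht htval ht0 ht').trans hV
      have hV'2 : V'ᶜ.card = l := by
        rw [Finset.card_compl, hV'c, ← hV, ← Finset.card_compl, hV2]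
      have hsumV := step_sum ht htval ht0 ht'
      rw [← hV'def] at hsumV
      have hm1 : 1 ≤ m := by omega
      obtain ⟨m', rfl⟩ : ∃ m', m = m' + 1 := ⟨m - 1, by omega⟩
      have hsum' : (∑ i ∈ A, (i : ℕ)) + (∑ i ∈ V', (i : ℕ)) = m' := by omega
      have he := step_blockEquiv ht htval ht0 ht' hV hV2 hV'c hV'2
      have hrel : (blockEquiv V' hV'c hV'2).symm.trans (blockEquiv A hA hA2)
          = (Equiv.swap t' t).trans
              ((blockEquiv V hV hV2).symm.trans (blockEquiv A hA hA2)) := by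
        rw [he]
        ext x
        simp [Equiv.symm_swap]
      have hIH := IH m' (by omega) A V' hA hA2 hV'c hV'2 hsum'
      rw [hrel] at hIH
      have hsw : Equiv.Perm.sign (Equiv.swap t' t) = -1 :=
        Equiv.Perm.sign_swap (step_lt htval ht0).ne
      have hmul : ((Equiv.swap t' t).trans
          ((blockEquiv V hV hV2).symm.trans (blockEquiv A hA hA2)) : Equiv.Perm (Fin n))
          = ((blockEquiv V hV hV2).symm.trans (blockEquiv A hA hA2)) * (Equiv.swap t' t) :=
        rfl
      rw [hmul, _root_.map_mul, hsw] at hIH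
      rw [pow_succ, ← hIH, mul_neg_one, mul_neg_one, neg_neg]

lemma orderEmbOfFin_cast {α : Type*} [LinearOrder α] (s : Finset α) {k k' : ℕ}
    (h : s.card = k) (h' : s.card = k') (i : Fin k) (i' : Fin k') (hi : (i : ℕ) = (i' : ℕ)) :
    s.orderEmbOfFin h i = s.orderEmbOfFin h' i' := by
  subst h
  have : k' = s.card := h'.symm
  subst this
  cases Fin.ext hi
  rfl

lemma minorM_det {m n : ℕ} {R : Type*} [CommRing R] (X : Matrix (Fin m) (Fin n) R)
    (A : Finset (Fin m)) (B : Finset (Fin n)) {k : ℕ} (h1 : A.card = k) (h2 : B.card = k) :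
    minorM X A B
      = (Matrix.of fun i j : Fin k => X (A.orderEmbOfFin h1 i) (B.orderEmbOfFin h2 j)).det := by
  rw [minorM, dif_pos (h1.trans h2.symm)]
  rw [← Matrix.det_reindex_self (finCongr h1)
    (Matrix.of fun i j : Fin A.card =>
      X (A.orderEmbOfFin rfl i) (B.orderEmbOfFin ((h1.trans h2.symm).symm) j))]
  congr 1


lemma minorM_congr {m n : ℕ} {R : Type*} [CommRing R] {X Y : Matrix (Fin m) (Fin n) R}
    {A : Finset (Fin m)} {B : Finset (Fin n)} (h : ∀ i ∈ A, ∀ j ∈ B, X i j = Y i j) :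
    minorM X A B = minorM Y A B := by
  rw [minorM, minorM]
  by_cases hc : A.card = B.card
  · rw [dif_pos hc, dif_pos hc]
    congr 1
    ext i j
    exact h _ (Finset.orderEmbOfFin_mem _ _ _) _ (Finset.orderEmbOfFin_mem _ _ _)
  · rw [dif_neg hc, dif_neg hc]

lemma minorM_eq_zero_row {m n : ℕ} {R : Type*} [CommRing R] {X : Matrix (Fin m) (Fin n) R}
    {A : Finset (Fin m)} {B : Finset (Fin n)} {i : Fin m} (hi : i ∈ A)
    (h : ∀ j ∈ B, X i j = 0) : minorM X A B = 0 := by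
  rw [minorM]
  by_cases hc : A.card = B.card
  · rw [dif_pos hc]
    obtain ⟨i0, hi0⟩ := mem_of_range_orderEmbOfFin (rfl : A.card = A.card) hi
    exact Matrix.det_eq_zero_of_row_eq_zero i0
      (fun j => by simp [hi0, h _ (Finset.orderEmbOfFin_mem _ _ _)])
  · rw [dif_neg hc]

lemma minorM_eq_zero_col {m n : ℕ} {R : Type*} [CommRing R] {X : Matrix (Fin m) (Fin n) R}
    {A : Finset (Fin m)} {B : Finset (Fin n)} {j : Fin n} (hj : j ∈ B)
    (h : ∀ i ∈ A, X i j = 0) : minorM X A B = 0 := by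
  rw [minorM]
  by_cases hc : A.card = B.card
  · rw [dif_pos hc]
    obtain ⟨j0, hj0⟩ := mem_of_range_orderEmbOfFin hc.symm hj
    exact Matrix.det_eq_zero_of_column_eq_zero j0
      (fun i => by simp [hj0, h _ (Finset.orderEmbOfFin_mem _ _ _)])
  · rw [dif_neg hc]

lemma minorM_transpose {m n : ℕ} {R : Type*} [CommRing R] (X : Matrix (Fin m) (Fin n) R)
    (A : Finset (Fin m)) (B : Finset (Fin n)) :
    minorM Xᵀ B A = minorM X A B := by
  by_cases hc : A.card = B.card
  · rw [minorM_det Xᵀ B A hc.symm rfl, minorM_det X A B rfl hc.symm,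
      ← Matrix.det_transpose (Matrix.of fun i j : Fin A.card =>
        X (A.orderEmbOfFin rfl i) (B.orderEmbOfFin hc.symm j))]
    rfl
  · rw [minorM, minorM, dif_neg hc, dif_neg (fun hc' => hc hc'.symm)]

lemma sign_blockPerm (A V : Finset (Fin n)) {k l : ℕ} (hA : A.card = k) (hA2 : Aᶜ.card = l)
    (hV : V.card = k) (hV2 : Vᶜ.card = l) :
    Equiv.Perm.sign ((blockEquiv V hV hV2).symm.trans (blockEquiv A hA hA2))
      = (-1) ^ (∑ i ∈ A, ((i : ℕ) + 1) + ∑ j ∈ V, ((j : ℕ) + 1)) := by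
  rw [sign_blockPerm_aux _ A V hA hA2 hV hV2 rfl]
  have h1 : ∑ i ∈ A, ((i : ℕ) + 1) = (∑ i ∈ A, (i : ℕ)) + k := by
    rw [Finset.sum_add_distrib]; simp [hA]
  have h2 : ∑ j ∈ V, ((j : ℕ) + 1) = (∑ j ∈ V, (j : ℕ)) + k := by
    rw [Finset.sum_add_distrib]; simp [hV]
  have h3 : ((∑ i ∈ A, (i : ℕ)) + k) + ((∑ j ∈ V, (j : ℕ)) + k)
      = ((∑ i ∈ A, (i : ℕ)) + (∑ j ∈ V, (j : ℕ))) + 2 * k := by ring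
  rw [h1, h2, h3, pow_add, pow_add, pow_mul]
  norm_num [pow_add]

lemma card_filter_perm (σ : Equiv.Perm (Fin n)) (A : Finset (Fin n)) :
    (Finset.univ.filter (fun j => σ j ∈ A)).card = A.card := by
  have himg : Finset.univ.filter (fun j => σ j ∈ A) = A.image σ.symm := by
    ext j
    simp only [Finset.mem_filter, Finset.mem_univ, true_and, Finset.mem_image]
    constructor
    · intro hj; exact ⟨σ j, hj, by simp⟩
    · rintro ⟨a, ha, rfl⟩; simpa using ha
  rw [himg, Finset.card_image_of_injective _ σ.symm.injective]

lemma term_eq {R : Type*} [CommRing R] (E : ℕ) (s1 s2 : ℤˣ) (P1 P2 : R) :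
    (((-1 : ℤˣ) ^ E * (s1 * s2))) • (P1 * P2) = (-1 : R) ^ E * ((s1 • P1) * (s2 • P2)) := by
  rcases Int.units_eq_one_or s1 with h1 | h1 <;>
    rcases Int.units_eq_one_or s2 with h2 | h2 <;>
      rcases Nat.even_or_odd E with hE | hE <;>
        subst h1 <;> subst h2 <;>
          simp [hE.neg_one_pow, Units.smul_def] <;> ring

lemma fiber_sum {R : Type*} [CommRing R] (X : Matrix (Fin n) (Fin n) R) (A V : Finset (Fin n))
    (hV : V.card = A.card) :
    ∑ σ ∈ Finset.univ.filter
        (fun σ : Equiv.Perm (Fin n) => Finset.univ.filter (fun j => σ j ∈ A) = V),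
      Equiv.Perm.sign σ • ∏ i, X (σ i) i = lap X A V := by
  have hV2 : Vᶜ.card = Aᶜ.card := by rw [Finset.card_compl, Finset.card_compl, hV]
  set eA := blockEquiv A rfl rfl with heA
  set eV := blockEquiv V hV hV2 with heV
  set Φ : Equiv.Perm (Fin A.card) × Equiv.Perm (Fin Aᶜ.card) → Equiv.Perm (Fin n) := fun p =>
    eV.symm.trans ((Equiv.sumCongr p.1 p.2).trans eA) with hΦ
  have hΦ1 : ∀ p i, Φ p (eV (Sum.inl i)) = eA (Sum.inl (p.1 i)) := by
    intro p i; simp [hΦ]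
  have hΦ2 : ∀ p j, Φ p (eV (Sum.inr j)) = eA (Sum.inr (p.2 j)) := by
    intro p j; simp [hΦ]
  set E := ∑ i ∈ A, ((i : ℕ) + 1) + ∑ j ∈ V, ((j : ℕ) + 1) with hE
  -- step 1 : the fiber sum is a sum over pairs of permutations
  have key : ∑ p : Equiv.Perm (Fin A.card) × Equiv.Perm (Fin Aᶜ.card),
      ((-1 : ℤˣ) ^ E * (Equiv.Perm.sign p.1 * Equiv.Perm.sign p.2)) •
        ((∏ i, X (eA (Sum.inl (p.1 i))) (eV (Sum.inl i))) *
          ∏ j, X (eA (Sum.inr (p.2 j))) (eV (Sum.inr j)))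
      = ∑ σ ∈ Finset.univ.filter
          (fun σ : Equiv.Perm (Fin n) => Finset.univ.filter (fun j => σ j ∈ A) = V),
        Equiv.Perm.sign σ • ∏ i, X (σ i) i := by
    refine Finset.sum_bij (fun p _ => Φ p) ?_ ?_ ?_ ?_
    · -- maps into the fiber
      intro p _
      simp only [Finset.mem_filter, Finset.mem_univ, true_and]
      ext j
      simp only [Finset.mem_filter, Finset.mem_univ, true_and]
      obtain ⟨x, rfl⟩ := eV.surjective j
      cases x with
      | inl i =>
        exact iff_of_true (hΦ1 p i ▸ blockEquiv_inl_mem A rfl rfl (p.1 i))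
          (blockEquiv_inl_mem V hV hV2 i)
      | inr i =>
        exact iff_of_false (hΦ2 p i ▸ blockEquiv_inr_mem A rfl rfl (p.2 i))
          (blockEquiv_inr_mem V hV hV2 i)
    · -- injective
      intro p _ q _ hpq
      have h1 : ∀ i, p.1 i = q.1 i := by
        intro i
        have := congrArg (fun σ : Equiv.Perm (Fin n) => σ (eV (Sum.inl i))) hpq
        simp only [hΦ1] at this
        exact Sum.inl.inj (eA.injective this)
      have h2 : ∀ j, p.2 j = q.2 j := by
        intro j
        have := congrArg (fun σ : Equiv.Perm (Fin n) => σ (eV (Sum.inr j))) hpq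
        simp only [hΦ2] at this
        exact Sum.inr.inj (eA.injective this)
      exact Prod.ext (Equiv.ext h1) (Equiv.ext h2)
    · -- surjective
      intro σ hσ
      simp only [Finset.mem_filter, Finset.mem_univ, true_and] at hσ
      have hmemiff : ∀ x : Fin n, σ x ∈ A ↔ x ∈ V := by
        intro x
        constructor
        · intro hx
          have : x ∈ Finset.univ.filter (fun j => σ j ∈ A) := by simp [hx]
          rwa [hσ] at this
        · intro hx
          rw [← hσ] at hx
          simpa using hx
      have hm1 : ∀ i : Fin A.card, σ (eV (Sum.inl i)) ∈ A :=
        fun i => (hmemiff _).mpr (blockEquiv_inl_mem V hV hV2 i)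
      have hm2 : ∀ j : Fin Aᶜ.card, σ (eV (Sum.inr j)) ∈ Aᶜ := fun j =>
        Finset.mem_compl.mpr (fun hc =>
          blockEquiv_inr_mem V hV hV2 j ((hmemiff _).mp hc))
      set f1 : Fin A.card → Fin A.card :=
        fun i => (A.orderIsoOfFin rfl).symm ⟨σ (eV (Sum.inl i)), hm1 i⟩ with hf1
      set f2 : Fin Aᶜ.card → Fin Aᶜ.card :=
        fun j => (Aᶜ.orderIsoOfFin rfl).symm ⟨σ (eV (Sum.inr j)), hm2 j⟩ with hf2
      have hinj1 : Function.Injective f1 := by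
        intro i i' h
        simp only [hf1] at h
        have := congrArg (fun z => ((A.orderIsoOfFin rfl) z : Fin n)) h
        simp only [OrderIso.apply_symm_apply] at this
        exact Sum.inl.inj (eV.injective (σ.injective this))
      have hinj2 : Function.Injective f2 := by
        intro i i' h
        simp only [hf2] at h
        have := congrArg (fun z => ((Aᶜ.orderIsoOfFin rfl) z : Fin n)) h
        simp only [OrderIso.apply_symm_apply] at this
        exact Sum.inr.inj (eV.injective (σ.injective this))
      refine ⟨(Equiv.ofBijective f1 (Finite.injective_iff_bijective.mp hinj1),
        Equiv.ofBijective f2 (Finite.injective_iff_bijective.mp hinj2)),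
        Finset.mem_univ _, ?_⟩
      apply Equiv.ext
      intro x
      obtain ⟨y, rfl⟩ := eV.surjective x
      cases y with
      | inl i =>
        rw [hΦ1]
        show eA (Sum.inl (f1 i)) = _
        rw [heA, blockEquiv_inl, ← Finset.coe_orderIsoOfFin_apply]
        simp [hf1]
      | inr j =>
        rw [hΦ2]
        show eA (Sum.inr (f2 j)) = _
        rw [heA, blockEquiv_inr, ← Finset.coe_orderIsoOfFin_apply]
        simp [hf2]
    · -- value equality
      intro p _
      have hsign : Equiv.Perm.sign (Φ p)
          = (-1 : ℤˣ) ^ E * (Equiv.Perm.sign p.1 * Equiv.Perm.sign p.2) := by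
      -- decompose
        have hq : Φ p = (eV.permCongr (Equiv.sumCongr p.1 p.2)).trans (eV.symm.trans eA) := by
          ext x
          simp [hΦ, Equiv.permCongr_apply]
        have hmul : (eV.permCongr (Equiv.sumCongr p.1 p.2)).trans (eV.symm.trans eA)
            = (eV.symm.trans eA) * (eV.permCongr (Equiv.sumCongr p.1 p.2)) := rfl
        rw [hq, hmul, _root_.map_mul, Equiv.Perm.sign_permCongr, Equiv.Perm.sign_sumCongr,
          sign_blockPerm A V rfl rfl hV hV2]
      have hprod : ∏ i, X (Φ p i) i
          = (∏ i, X (eA (Sum.inl (p.1 i))) (eV (Sum.inl i))) *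
              ∏ j, X (eA (Sum.inr (p.2 j))) (eV (Sum.inr j)) := by
        rw [← Equiv.prod_comp eV (fun t => X (Φ p t) t), Fintype.prod_sum_type]
        simp only [hΦ1, hΦ2]
      rw [hsign, hprod]
  rw [← key]
  -- step 2 : identify with lap
  rw [lap, minorM_det X A V rfl hV, minorM_det X Aᶜ Vᶜ rfl hV2,
    Matrix.det_apply, Matrix.det_apply, Finset.sum_mul_sum, Finset.mul_sum,
    Fintype.sum_prod_type]
  refine Finset.sum_congr rfl (fun π _ => ?_)
  rw [Finset.mul_sum]
  refine Finset.sum_congr rfl (fun ρ _ => ?_)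
  exact term_eq E _ _ _ _

lemma lap_zero_of_card {R : Type*} [CommRing R] (X : Matrix (Fin n) (Fin n) R)
    (A V : Finset (Fin n)) (h : ¬ V.card = A.card) : lap X A V = 0 := by
  rw [lap, minorM, dif_neg (fun hc => h hc.symm)]
  ring

theorem laplace_rows {R : Type*} [CommRing R] (X : Matrix (Fin n) (Fin n) R)
    (A : Finset (Fin n)) : X.det = ∑ V : Finset (Fin n), lap X A V := by
  rw [Matrix.det_apply, ← Finset.sum_fiberwise Finset.univ
    (fun σ : Equiv.Perm (Fin n) => Finset.univ.filter (fun j => σ j ∈ A))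
    (fun σ => Equiv.Perm.sign σ • ∏ i, X (σ i) i)]
  refine Finset.sum_congr rfl (fun V _ => ?_)
  by_cases hV : V.card = A.card
  · exact fiber_sum X A V hV
  · rw [lap_zero_of_card X A V hV]
    have hempty : Finset.univ.filter
        (fun σ : Equiv.Perm (Fin n) => Finset.univ.filter (fun j => σ j ∈ A) = V) = ∅ := by
      rw [Finset.filter_eq_empty_iff]
      intro σ _ hc
      exact hV (by rw [← hc, card_filter_perm])
    rw [hempty, Finset.sum_empty]

lemma lap_transpose {R : Type*} [CommRing R] (X : Matrix (Fin n) (Fin n) R)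
    (A B : Finset (Fin n)) : lap Xᵀ B A = lap X A B := by
  rw [lap, lap, minorM_transpose X A B, minorM_transpose X Aᶜ Bᶜ,
    Nat.add_comm (∑ i ∈ B, ((i : ℕ) + 1)) (∑ j ∈ A, ((j : ℕ) + 1))]

theorem laplace_cols {R : Type*} [CommRing R] (X : Matrix (Fin n) (Fin n) R)
    (B : Finset (Fin n)) : X.det = ∑ U : Finset (Fin n), lap X U B := by
  rw [← Matrix.det_transpose X, laplace_rows Xᵀ B]
  exact Finset.sum_congr rfl (fun U _ => lap_transpose X U B)

/-- Theorem 1: `Σ_{V ⊆ B} X{A|V} = Σ_{U ⊇ A} X{U|B}`. -/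
theorem statement5 {n : ℕ} {R : Type*} [CommRing R] (X : Matrix (Fin n) (Fin n) R)
    (A B : Finset (Fin n)) :
    ∑ V ∈ B.powerset, lap X A V =
      ∑ U ∈ Finset.univ.filter (fun U : Finset (Fin n) => A ⊆ U), lap X U B := by
  classical
  set M : Matrix (Fin n) (Fin n) R :=
    Matrix.of (fun i j => if i ∈ A ∧ j ∉ B then 0 else X i j) with hM
  have hMeq : ∀ i j, (i ∉ A ∨ j ∈ B) → M i j = X i j := by
    intro i j hij
    simp only [hM, Matrix.of_apply, ite_eq_right_iff]
    intro hc
    rcases hij with h | h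
    · exact absurd hc.1 h
    · exact absurd h hc.2
  have hMzero : ∀ i j, i ∈ A → j ∉ B → M i j = 0 := by
    intro i j hi hj
    simp [hM, hi, hj]
  -- LHS = det M
  have hL : ∑ V ∈ B.powerset, lap X A V = M.det := by
    rw [laplace_rows M A]
    rw [← Finset.sum_subset (Finset.subset_univ B.powerset)]
    · refine Finset.sum_congr rfl (fun V hV => ?_)
      rw [Finset.mem_powerset] at hV
      rw [lap, lap, minorM_congr (fun i hi j hj => (hMeq i j (Or.inr (hV hj))).symm),
        minorM_congr (X := X) (Y := M) (A := Aᶜ) (B := Vᶜ)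
          (fun i hi j _ => (hMeq i j (Or.inl (Finset.mem_compl.mp hi))).symm)]
    · intro V _ hV
      rw [Finset.mem_powerset] at hV
      obtain ⟨j, hjV, hjB⟩ := Finset.not_subset.mp hV
      rw [lap, minorM_eq_zero_col hjV
        (fun i hi => hMzero i j hi hjB)]
      ring
  -- RHS = det M
  have hR : ∑ U ∈ Finset.univ.filter (fun U : Finset (Fin n) => A ⊆ U), lap X U B
      = M.det := by
    rw [laplace_cols M B]
    rw [← Finset.sum_subset
      (Finset.filter_subset (fun U : Finset (Fin n) => A ⊆ U) Finset.univ)]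
    · refine Finset.sum_congr rfl (fun U hU => ?_)
      rw [Finset.mem_filter] at hU
      rw [lap, lap, minorM_congr (fun i hi j hj => (hMeq i j (Or.inr hj)).symm),
        minorM_congr (X := X) (Y := M) (A := Uᶜ) (B := Bᶜ)
          (fun i hi j _ => (hMeq i j (Or.inl (fun hiA =>
            Finset.mem_compl.mp hi (hU.2 hiA)))).symm)]
    · intro U _ hU
      rw [Finset.mem_filter] at hU
      push_neg at hU
      obtain ⟨i, hiA, hiU⟩ := Finset.not_subset.mp (hU (Finset.mem_univ U))
      rw [lap, minorM_eq_zero_row (Finset.mem_compl.mpr hiU)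
        (fun j hj => hMzero i j hiA (Finset.mem_compl.mp hj))]
      ring
  rw [hL, hR]
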